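/- Let q : [0,∞) → ℝ be continuous with polynomial growth, continuously differentiable on [0, δ] for some δ > 0, and with q(0) = 0. Then lim_{σ → 0⁺} ∫_0^∞ h(σ, x)·q(x) dx = q'(0)/2, where h(σ,x) = x·exp(−(x − σ)²/(2σ))/√(2πσ³). -/

import Mathlib

open Set MeasureTheory Filter

/-- First-passage density to `0` of a Brownian motion with unit negative drift started
at `x`: `h σ x = x exp(-(x-σ)²/(2σ))/√(2πσ³)` for `σ > 0`, and `0` for `σ ≤ 0`. -/
noncomputable def hker (σ x : ℝ) : ℝ :=
  if 0 < σ then x * Real.exp (-(x - σ) ^ 2 / (2 * σ)) / Real.sqrt (2 * Real.pi * σ ^ 3)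
  else 0

/-! Write `q x = x * r x`, so that `r x → q'(0)` as `x → 0⁺`. Substituting `σ = s²` and
`x = s (y + s)` turns `h(σ, x) q(x) dx` into `(y + s)² r(s (y + s)) φ(y) dy` on `y > -s`, where
`φ` is the standard normal density. Since `r` has polynomial growth (near `0` by the mean value
inequality), dominated convergence gives the limit `q'(0) ∫_0^∞ y² φ(y) dy = q'(0) / 2` as `s → 0⁺`. -/

open ProbabilityTheory Real Topology

lemma gaussianPDFReal_zero_one (y : ℝ) :
    gaussianPDFReal 0 1 y = exp (-(1 / 2) * y ^ 2) / √(2 * π) := by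
  simp only [gaussianPDFReal, NNReal.coe_one, mul_one, sub_zero]
  ring_nf

lemma continuous_gaussianPDFReal (μ : ℝ) (v : NNReal) : Continuous (gaussianPDFReal μ v) := by
  unfold gaussianPDFReal
  fun_prop

lemma integrable_one_add_abs_pow_mul_gaussianPDFReal (n : ℕ) :
    Integrable fun y : ℝ => (1 + |y|) ^ n * gaussianPDFReal 0 1 y := by
  have hmom : Integrable fun y : ℝ => |y| ^ n * gaussianPDFReal 0 1 y := by
    have := (integrable_rpow_mul_exp_neg_mul_sq (b := 1 / 2) (by norm_num)
      (s := n) (by linarith [n.cast_nonneg (α := ℝ)])).norm.div_const √(2 * π)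
    simpa [gaussianPDFReal_zero_one, rpow_natCast, abs_of_pos (exp_pos _), mul_div_assoc]
      using this
  refine Integrable.mono' ((integrable_gaussianPDFReal 0 1).add hmom |>.const_mul (2 ^ (n - 1)))
    ((by fun_prop : Continuous fun y : ℝ => (1 + |y|) ^ n).mul
      (continuous_gaussianPDFReal 0 1)).aestronglyMeasurable (.of_forall fun y => ?_)
  have hφ := gaussianPDFReal_nonneg 0 1 y
  rw [norm_of_nonneg (by positivity)]
  calc _ ≤ 2 ^ (n - 1) * (1 + |y| ^ n) * gaussianPDFReal 0 1 y := by
        gcongr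
        simpa using add_pow_le zero_le_one (abs_nonneg y) n
    _ = _ := by simp only [Pi.add_apply]; ring

lemma integral_Ioi_sq_mul_gaussianPDFReal :
    ∫ y in Ioi (0 : ℝ), y ^ 2 * gaussianPDFReal 0 1 y = 1 / 2 := by
  have h := integral_rpow_mul_exp_neg_mul_rpow (p := 2) (q := 2) (b := 1 / 2)
    two_pos (by norm_num) (by norm_num)
  have hΓ : Gamma (3 / 2) = √π / 2 := by
    rw [show (3 / 2 : ℝ) = 1 / 2 + 1 by norm_num, Gamma_add_one (by norm_num), Gamma_one_half_eq]
    ring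
  have hpow : (1 / 2 : ℝ) ^ (-(2 + 1) / 2 : ℝ) = 2 * √2 := by
    rw [one_div, inv_rpow zero_le_two, ← rpow_neg zero_le_two, sqrt_eq_rpow,
      show -(-(2 + 1) / 2 : ℝ) = 1 + 1 / 2 by norm_num, rpow_add two_pos, rpow_one]
  simp only [rpow_two, hpow, show ((2 : ℝ) + 1) / 2 = 3 / 2 by norm_num, hΓ] at h
  simp_rw [gaussianPDFReal_zero_one, mul_div_assoc', integral_div, h, sqrt_mul zero_le_two]
  field_simp

lemma setIntegral_Ioi_zero_eq_comp_mul_add (g : ℝ → ℝ) {s : ℝ} (hs : 0 < s) :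
    ∫ x in Ioi 0, g x = s * ∫ y in Ioi (-s), g (s * (y + s)) := by
  have hind : ∀ y, (Ioi (-s)).indicator (fun y => g (s * (y + s))) y
      = (Ioi 0).indicator g (s * (y + s)) := by
    intro y
    by_cases hy : -s < y
    · rw [indicator_of_mem (mem_Ioi.2 hy), indicator_of_mem (mem_Ioi.2 (by nlinarith))]
    · rw [indicator_of_notMem (by simpa using hy),
        indicator_of_notMem (by simp only [mem_Ioi, not_lt]; nlinarith)]
  rw [← integral_indicator measurableSet_Ioi, ← integral_indicator measurableSet_Ioi]
  simp_rw [hind]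
  rw [integral_add_right_eq_self (fun y => (Ioi 0).indicator g (s * y)),
    Measure.integral_comp_mul_left, abs_of_pos (inv_pos.2 hs), smul_eq_mul,
    mul_inv_cancel_left₀ hs.ne']

lemma mul_hker_sq_mul_add {s : ℝ} (hs : 0 < s) (y : ℝ) :
    s * hker (s ^ 2) (s * (y + s)) = (y + s) / s * gaussianPDFReal 0 1 y := by
  have hexp : -(s * (y + s) - s ^ 2) ^ 2 / (2 * s ^ 2) = -(1 / 2) * y ^ 2 := by
    field_simp
    ring
  have hsqrt : √(2 * π * (s ^ 2) ^ 3) = √(2 * π) * s ^ 3 := by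
    rw [sqrt_mul (by positivity), show (s ^ 2) ^ 3 = (s ^ 3) ^ 2 by ring, sqrt_sq (by positivity)]
  rw [hker, if_pos (by positivity), hexp, hsqrt, gaussianPDFReal_zero_one]
  field_simp

lemma setIntegral_Ioi_hker_sq_mul (f : ℝ → ℝ) {s : ℝ} (hs : 0 < s) :
    ∫ x in Ioi 0, hker (s ^ 2) x * f x =
      ∫ y in Ioi (-s), (y + s) ^ 2 * (f (s * (y + s)) / (s * (y + s))) * gaussianPDFReal 0 1 y := by
  rw [setIntegral_Ioi_zero_eq_comp_mul_add _ hs, ← integral_const_mul]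
  refine setIntegral_congr_fun measurableSet_Ioi fun y hy => ?_
  have hys : 0 < y + s := by linarith [mem_Ioi.1 hy]
  rw [← mul_assoc, mul_hker_sq_mul_add hs]
  field_simp

lemma sq_mul_one_add_pow_le {s y : ℝ} (hs : 0 < s) (hs1 : s ≤ 1) (hy : -s < y) (d : ℕ) :
    (y + s) ^ 2 * (1 + (s * (y + s)) ^ d) ≤ 2 * (1 + |y|) ^ (d + 2) := by
  have hys : 0 < y + s := by linarith
  have h1 : y + s ≤ 1 + |y| := by linarith [le_abs_self y]
  have h2 : s * (y + s) ≤ 1 + |y| := (mul_le_of_le_one_left hys.le hs1).trans h1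
  have h3 : 1 ≤ (1 + |y|) ^ d := one_le_pow₀ (by linarith [abs_nonneg y])
  calc (y + s) ^ 2 * (1 + (s * (y + s)) ^ d) ≤ (1 + |y|) ^ 2 * (2 * (1 + |y|) ^ d) := by
        gcongr
        linarith [pow_le_pow_left₀ (by positivity) h2 d]
    _ = 2 * (1 + |y|) ^ (d + 2) := by ring

section Rescaled

variable {r : ℝ → ℝ} {C L : ℝ} {d : ℕ}

lemma norm_indicator_Ioi_neg_sq_mul_le (hr_bound : ∀ x, 0 < x → |r x| ≤ C * (1 + x ^ d))
    {s : ℝ} (hs : 0 < s) (hs1 : s ≤ 1) (y : ℝ) :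
    ‖(Ioi (-s)).indicator (fun y => (y + s) ^ 2 * r (s * (y + s)) * gaussianPDFReal 0 1 y) y‖
      ≤ 2 * C * ((1 + |y|) ^ (d + 2) * gaussianPDFReal 0 1 y) := by
  have hC : 0 ≤ C := by
    have := (abs_nonneg _).trans (hr_bound 1 one_pos)
    rw [one_pow] at this
    linarith
  have hφ := gaussianPDFReal_nonneg 0 1 y
  by_cases hy : y ∈ Ioi (-s)
  · rw [indicator_of_mem hy, norm_mul, norm_mul, norm_of_nonneg (sq_nonneg _),
      norm_of_nonneg hφ, norm_eq_abs]
    have hx : 0 < s * (y + s) := mul_pos hs (by linarith [mem_Ioi.1 hy])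
    calc (y + s) ^ 2 * |r (s * (y + s))| * gaussianPDFReal 0 1 y
        ≤ (y + s) ^ 2 * (C * (1 + (s * (y + s)) ^ d)) * gaussianPDFReal 0 1 y := by
          gcongr
          exact hr_bound _ hx
      _ = C * ((y + s) ^ 2 * (1 + (s * (y + s)) ^ d)) * gaussianPDFReal 0 1 y := by ring
      _ ≤ C * (2 * (1 + |y|) ^ (d + 2)) * gaussianPDFReal 0 1 y := by
          gcongr C * ?_ * _
          exact sq_mul_one_add_pow_le hs hs1 hy d
      _ = _ := by ring
  · rw [indicator_of_notMem hy, norm_zero]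
    positivity

lemma tendsto_indicator_Ioi_neg_sq_mul (hr_lim : Tendsto r (𝓝[>] 0) (𝓝 L)) (y : ℝ) :
    Tendsto
      (fun s => (Ioi (-s)).indicator
        (fun y => (y + s) ^ 2 * r (s * (y + s)) * gaussianPDFReal 0 1 y) y)
      (𝓝[>] 0) (𝓝 ((Ioi 0).indicator (fun y => y ^ 2 * L * gaussianPDFReal 0 1 y) y)) := by
  rcases lt_or_ge y 0 with hy | hy
  · rw [indicator_of_notMem (notMem_Ioi.2 hy.le)]
    refine tendsto_const_nhds.congr' ?_
    filter_upwards [Ioo_mem_nhdsGT (neg_pos.2 hy)] with s hs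
    exact (indicator_of_notMem (notMem_Ioi.2 (by linarith [hs.2])) _).symm
  have hlim : (Ioi 0).indicator (fun y => y ^ 2 * L * gaussianPDFReal 0 1 y) y
      = y ^ 2 * L * gaussianPDFReal 0 1 y := by
    rcases hy.eq_or_lt with rfl | hy
    · simp
    · exact indicator_of_mem hy _
  have harg : Tendsto (fun s => s * (y + s)) (𝓝[>] 0) (𝓝[>] 0) := by
    refine tendsto_nhdsWithin_iff.2 ⟨?_, ?_⟩
    · exact ((by fun_prop : Continuous fun s : ℝ => s * (y + s)).tendsto' 0 0
        (by simp)).mono_left nhdsWithin_le_nhds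
    · filter_upwards [self_mem_nhdsWithin] with s (hs : 0 < s)
      exact mul_pos hs (by linarith)
  have hsq : Tendsto (fun s : ℝ => (y + s) ^ 2) (𝓝[>] 0) (𝓝 (y ^ 2)) :=
    ((by fun_prop : Continuous fun s : ℝ => (y + s) ^ 2).tendsto' 0 _
      (by simp)).mono_left nhdsWithin_le_nhds
  rw [hlim]
  refine ((hsq.mul (hr_lim.comp harg)).mul_const _).congr' ?_
  filter_upwards [self_mem_nhdsWithin] with s (hs : 0 < s)
  rw [indicator_of_mem (mem_Ioi.2 (by linarith))]
  rfl

theorem tendsto_setIntegral_Ioi_neg_sq_mul_gaussianPDFReal (hr_cont : ContinuousOn r (Ioi 0))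
    (hr_bound : ∀ x, 0 < x → |r x| ≤ C * (1 + x ^ d)) (hr_lim : Tendsto r (𝓝[>] 0) (𝓝 L)) :
    Tendsto (fun s => ∫ y in Ioi (-s), (y + s) ^ 2 * r (s * (y + s)) * gaussianPDFReal 0 1 y)
      (𝓝[>] 0) (𝓝 (L / 2)) := by
  have hL : L / 2 = ∫ y, (Ioi 0).indicator (fun y => y ^ 2 * L * gaussianPDFReal 0 1 y) y := by
    rw [integral_indicator measurableSet_Ioi]
    simp_rw [mul_comm _ L, mul_assoc]
    rw [integral_const_mul, integral_Ioi_sq_mul_gaussianPDFReal]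
    ring
  simp_rw [hL, ← integral_indicator measurableSet_Ioi]
  refine tendsto_integral_filter_of_dominated_convergence _ ?_ ?_
    ((integrable_one_add_abs_pow_mul_gaussianPDFReal (d + 2)).const_mul (2 * C))
    (.of_forall (tendsto_indicator_Ioi_neg_sq_mul hr_lim))
  · filter_upwards [self_mem_nhdsWithin] with s (hs : 0 < s)
    have hmaps : MapsTo (fun y => s * (y + s)) (Ioi (-s)) (Ioi 0) := fun y hy =>
      mul_pos hs (by linarith [mem_Ioi.1 hy])
    refine (aestronglyMeasurable_indicator_iff measurableSet_Ioi).2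
      (ContinuousOn.aestronglyMeasurable ?_ measurableSet_Ioi)
    exact (((continuous_add_const s).pow 2).continuousOn.mul
      (hr_cont.comp (by fun_prop) hmaps)).mul (continuous_gaussianPDFReal 0 1).continuousOn
  · filter_upwards [Ioc_mem_nhdsGT one_pos] with s hs
    exact .of_forall (norm_indicator_Ioi_neg_sq_mul_le hr_bound hs.1 hs.2)

end Rescaled

lemma tendsto_div_self_nhdsGT_of_hasDerivWithinAt {f : ℝ → ℝ} {f' : ℝ}
    (hf : HasDerivWithinAt f f' (Ioi 0) 0) (h0 : f 0 = 0) :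
    Tendsto (fun x => f x / x) (𝓝[>] 0) (𝓝 f') := by
  refine ((hasDerivWithinAt_iff_tendsto_slope' (lt_irrefl 0)).1 hf).congr fun x => ?_
  simp [slope_def_field, h0]

lemma abs_div_self_le_of_abs_le {q : ℝ → ℝ} {δ K M : ℝ} {d : ℕ} (hδ : 0 < δ) (hK : 0 ≤ K)
    (hlin : ∀ x ∈ Icc 0 δ, |q x| ≤ M * x) (hpoly : ∀ x, 0 ≤ x → |q x| ≤ K * (1 + x ^ d))
    {x : ℝ} (hx : 0 < x) : |q x / x| ≤ (M + K / δ) * (1 + x ^ d) := by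
  have hM : 0 ≤ M :=
    nonneg_of_mul_nonneg_left ((abs_nonneg _).trans (hlin δ ⟨hδ.le, le_rfl⟩)) hδ
  have hxd : 1 ≤ 1 + x ^ d := by linarith [pow_nonneg hx.le d]
  rw [abs_div, abs_of_pos hx, div_le_iff₀ hx]
  rcases le_total x δ with hxδ | hδx
  · calc |q x| ≤ M * x := hlin x ⟨hx.le, hxδ⟩
      _ ≤ (M + K / δ) * (1 + x ^ d) * x := by
        gcongr
        nlinarith [div_nonneg hK hδ.le]
  · calc |q x| ≤ K * (1 + x ^ d) := hpoly x hx.le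
      _ = K / δ * (1 + x ^ d) * δ := by field_simp
      _ ≤ (M + K / δ) * (1 + x ^ d) * x := by
        gcongr
        linarith

/-- Short-time asymptotics of the first-passage kernel: for `q`
continuous with polynomial growth, continuously differentiable near `0` and `q 0 = 0`,
`∫_0^∞ h(σ,x) q(x) dx → q'(0)/2` as `σ → 0⁺`. -/
theorem first_passage_kernel_short_time
    (q q1 : ℝ → ℝ) (δ : ℝ) (hδ : 0 < δ)
    (hqcont : ContinuousOn q (Ici 0))
    (K : ℝ) (hK : 0 < K) (d : ℕ)
    (hpoly : ∀ x : ℝ, 0 ≤ x → |q x| ≤ K * (1 + x ^ d))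
    (hd1 : ∀ x ∈ Icc (0 : ℝ) δ, HasDerivWithinAt q (q1 x) (Icc 0 δ) x)
    (hq1cont : ContinuousOn q1 (Icc 0 δ))
    (hq0 : q 0 = 0) :
    Tendsto (fun σ => ∫ x in Ioi (0 : ℝ), hker σ x * q x)
      (nhdsWithin 0 (Ioi 0)) (nhds (q1 0 / 2)) := by
  obtain ⟨M, hM⟩ := isCompact_Icc.exists_bound_of_continuousOn hq1cont
  have hlin : ∀ x ∈ Icc 0 δ, |q x| ≤ M * x := fun x hx => by
    simpa [hq0, abs_of_nonneg hx.1] using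
      (convex_Icc 0 δ).norm_image_sub_le_of_norm_hasDerivWithin_le hd1 hM (left_mem_Icc.2 hδ.le) hx
  have hr_lim : Tendsto (fun x => q x / x) (𝓝[>] 0) (𝓝 (q1 0)) :=
    tendsto_div_self_nhdsGT_of_hasDerivWithinAt
      ((hd1 0 (left_mem_Icc.2 hδ.le)).mono_of_mem_nhdsWithin (Icc_mem_nhdsGT hδ)) hq0
  have hr_cont : ContinuousOn (fun x => q x / x) (Ioi 0) :=
    (hqcont.mono Ioi_subset_Ici_self).div continuousOn_id fun x hx => hx.ne'
  have hΦ := tendsto_setIntegral_Ioi_neg_sq_mul_gaussianPDFReal hr_cont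
    (fun x hx => abs_div_self_le_of_abs_le hδ hK.le hlin hpoly hx) hr_lim
  have hsqrt : Tendsto sqrt (𝓝[>] 0) (𝓝[>] 0) := tendsto_nhdsWithin_iff.2
    ⟨(continuous_sqrt.tendsto' 0 0 sqrt_zero).mono_left nhdsWithin_le_nhds,
      eventually_nhdsWithin_of_forall fun σ hσ => sqrt_pos.2 hσ⟩
  refine (hΦ.comp hsqrt).congr' ?_
  filter_upwards [self_mem_nhdsWithin] with σ (hσ : 0 < σ)
  rw [Function.comp_apply, ← setIntegral_Ioi_hker_sq_mul _ (sqrt_pos.2 hσ), sq_sqrt hσ.le]
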